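/- arXiv:1807.01254 — 2 statements merged into one kernel-verified Lean document; each statement's English description precedes it below -/
import Mathlib

section
/- Let γ satisfy 0 ≤ γ ≤ 1, let s ≥ 0 be a real number, and let k₁, k₂, k₃ be integers. Then |(e^{2is k₁(k₁+k₂+k₃)} − 1)(e^{2is k₂ k₃} − 1)| ≤ 2 s^{2γ} Σ |k_ℓ² k_j k_m|^γ, where the sum runs over all six ordered triples (ℓ, j, m) of pairwise distinct indices from {1, 2, 3}. -/
/-!
Since `‖e^{ix} - 1‖ = 2 |sin (x/2)| ≤ 2 min(1, |x/2|) ≤ 2 |x/2|^γ`, each factor is at most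
`2 (s |n|)^γ`. The triangle inequality for `|k₁ + k₂ + k₃|` bounds the product of the two
integers by `|k₁|² |k₂| |k₃| + |k₂|² |k₁| |k₃| + |k₃|² |k₁| |k₂|`, and `t ↦ t^γ` is
subadditive; the six-term sum is twice this three-term one.
-/

open Real Complex

lemma Real.min_one_le_rpow {x p : ℝ} (hx : 0 ≤ x) (hp : 0 ≤ p) (hp1 : p ≤ 1) :
    min 1 x ≤ x ^ p := by
  rcases le_total x 1 with hx1 | hx1
  · exact (min_le_right _ _).trans (Real.self_le_rpow_of_le_one hx hx1 hp1)
  · exact (min_le_left _ _).trans (Real.one_le_rpow hx1 hp)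

lemma Complex.norm_exp_I_mul_ofReal_sub_one_le_rpow (x : ℝ) {p : ℝ} (hp : 0 ≤ p)
    (hp1 : p ≤ 1) :
    ‖exp (I * x) - 1‖ ≤ 2 * |x / 2| ^ p := by
  have hsin : |Real.sin (x / 2)| ≤ min 1 |x / 2| :=
    le_min (Real.abs_sin_le_one _) Real.abs_sin_le_abs
  rw [norm_exp_I_mul_ofReal_sub_one, Real.norm_eq_abs, abs_mul, abs_two]
  gcongr
  exact hsin.trans (Real.min_one_le_rpow (abs_nonneg _) hp hp1)

lemma abs_mul_add_add_mul_abs_mul_le {α : Type*} [CommRing α] [LinearOrder α] [IsOrderedRing α]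
    (a b c : α) :
    |a * (a + b + c)| * |b * c|
      ≤ |a| ^ 2 * |b| * |c| + |b| ^ 2 * |a| * |c| + |c| ^ 2 * |a| * |b| := by
  calc |a * (a + b + c)| * |b * c| = |a + b + c| * (|a| * |b| * |c|) := by
        simp only [abs_mul]; ring
    _ ≤ (|a| + |b| + |c|) * (|a| * |b| * |c|) := by gcongr; exact abs_add_three a b c
    _ = _ := by ring

lemma Real.rpow_add_add_le_add_add_rpow {a b c p : ℝ} (ha : 0 ≤ a) (hb : 0 ≤ b) (hc : 0 ≤ c)
    (hp : 0 ≤ p) (hp1 : p ≤ 1) : (a + b + c) ^ p ≤ a ^ p + b ^ p + c ^ p :=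
  (Real.rpow_add_le_add_rpow (by positivity) hc hp hp1).trans
    (by gcongr; exact Real.rpow_add_le_add_rpow ha hb hp hp1)

theorem stmt4 (γ s : ℝ) (h0 : 0 ≤ γ) (h1 : γ ≤ 1) (hs : 0 ≤ s) (k₁ k₂ k₃ : ℤ) :
    ‖(Complex.exp (2 * Complex.I * s * ((k₁ * (k₁ + k₂ + k₃) : ℤ) : ℂ)) - 1) *
        (Complex.exp (2 * Complex.I * s * ((k₂ * k₃ : ℤ) : ℂ)) - 1)‖
      ≤ 2 * s ^ (2 * γ) *
        ((|(k₁ : ℝ)| ^ 2 * |(k₂ : ℝ)| * |(k₃ : ℝ)|) ^ γ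
          + (|(k₁ : ℝ)| ^ 2 * |(k₃ : ℝ)| * |(k₂ : ℝ)|) ^ γ
          + (|(k₂ : ℝ)| ^ 2 * |(k₁ : ℝ)| * |(k₃ : ℝ)|) ^ γ
          + (|(k₂ : ℝ)| ^ 2 * |(k₃ : ℝ)| * |(k₁ : ℝ)|) ^ γ
          + (|(k₃ : ℝ)| ^ 2 * |(k₁ : ℝ)| * |(k₂ : ℝ)|) ^ γ
          + (|(k₃ : ℝ)| ^ 2 * |(k₂ : ℝ)| * |(k₁ : ℝ)|) ^ γ) := by
  have bound (n : ℤ) :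
      ‖Complex.exp (2 * Complex.I * s * (n : ℂ)) - 1‖ ≤ 2 * (s * |(n : ℝ)|) ^ γ := by
    have h := norm_exp_I_mul_ofReal_sub_one_le_rpow (2 * (s * n)) h0 h1
    rwa [mul_div_cancel_left₀ _ two_ne_zero, abs_mul, abs_of_nonneg hs,
      show I * ((2 * (s * n) : ℝ) : ℂ) = 2 * I * s * n by push_cast; ring] at h
  have hs2 : s ^ (2 * γ) = (s ^ 2) ^ γ := by rw [Real.rpow_mul hs]; norm_cast
  calc _ ≤ 2 * (s * |((k₁ * (k₁ + k₂ + k₃) : ℤ) : ℝ)|) ^ γ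
          * (2 * (s * |((k₂ * k₃ : ℤ) : ℝ)|) ^ γ) := by
        rw [norm_mul]; gcongr <;> apply bound
    _ = 4 * s ^ (2 * γ) * (|(k₁ : ℝ) * (k₁ + k₂ + k₃)| * |(k₂ : ℝ) * k₃|) ^ γ := by
        rw [hs2, mul_mul_mul_comm, ← mul_rpow (by positivity) (by positivity),
          mul_assoc (4 : ℝ), ← mul_rpow (by positivity) (by positivity)]
        push_cast; ring_nf
    _ ≤ 4 * s ^ (2 * γ) * (|(k₁ : ℝ)| ^ 2 * |(k₂ : ℝ)| * |(k₃ : ℝ)|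
          + |(k₂ : ℝ)| ^ 2 * |(k₁ : ℝ)| * |(k₃ : ℝ)|
          + |(k₃ : ℝ)| ^ 2 * |(k₁ : ℝ)| * |(k₂ : ℝ)|) ^ γ := by
        gcongr; exact abs_mul_add_add_mul_abs_mul_le (k₁ : ℝ) k₂ k₃
    _ ≤ 4 * s ^ (2 * γ) * ((|(k₁ : ℝ)| ^ 2 * |(k₂ : ℝ)| * |(k₃ : ℝ)|) ^ γ
          + (|(k₂ : ℝ)| ^ 2 * |(k₁ : ℝ)| * |(k₃ : ℝ)|) ^ γ
          + (|(k₃ : ℝ)| ^ 2 * |(k₁ : ℝ)| * |(k₂ : ℝ)|) ^ γ) := by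
        gcongr
        exact rpow_add_add_le_add_add_rpow (by positivity) (by positivity) (by positivity) h0 h1
    _ = _ := by ring_nf
end

section
/- Let d ≥ 1 be an integer, let j ∈ {1,…,d}, let τ > 0, let x ∈ ℝ^d, and let w, v : ℤ^d → ℂ be sequences with Σ_{κ∈ℤ^d} |w_κ| < ∞ and Σ_{λ∈ℤ^d} |v_λ| < ∞. Then Σ_{κ,λ∈ℤ^d} w_κ v_λ e^{i(κ+λ)·x} ∫₀^τ e^{2is κ_j λ_j} ds = (i/2) Σ_{κ,λ∈ℤ^d: κ_j≠0, λ_j≠0} w_κ v_λ e^{i(κ+λ)·x} (e^{2iτ κ_j λ_j} − 1) / ((i κ_j)(i λ_j)) + τ [ v(x) W_j(x) + w(x) V_j(x) − W_j(x) V_j(x) ], where w(x) = Σ_κ w_κ e^{iκ·x}, v(x) = Σ_λ v_λ e^{iλ·x}, W_j(x) = Σ_{κ: κ_j=0} w_κ e^{iκ·x}, and V_j(x) = Σ_{λ: λ_j=0} v_λ e^{iλ·x}. (This is the resolved form, at the level of Fourier series, of the integral K_j(w,v) arising in the d-dimensional Fourier integrator; W_j and V_j are the zeroth modes of the partial Fourier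 transform in direction j.) -/
/-!
For each pair `(κ, λ)` the time integral is `τ` when `κ_j λ_j = 0` and
`(e^{2iτκ_jλ_j} - 1) / (2iκ_jλ_j)` otherwise. The latter is bounded uniformly, since
`|κ_j λ_j| ≥ 1`, so both parts are absolutely summable and may be summed separately. The resonant part,
supported on `κ_j = 0 ∨ λ_j = 0`, splits by inclusion–exclusion into products of the series
`w`, `v` and their zero modes `W_j`, `V_j`, once the plane wave `e^{i(κ+λ)·x}` is factored as
`e^{iκ·x} e^{iλ·x}`.
-/

open Complex

lemma summable_norm_ite_of_summable_norm {E α : Type*} [SeminormedAddGroup E] {f : α → E} (P : α → Prop) [DecidablePred P]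
    (hf : Summable fun a => ‖f a‖) :
    Summable fun a => ‖if P a then f a else 0‖ :=
  hf.of_nonneg_of_le (fun _ => norm_nonneg _) fun a => by split_ifs <;> simp

lemma tsum_ite_or_mul {R α β : Type*} [NormedCommRing R] [CompleteSpace R] {f : α → R} {g : β → R} (P : α → Prop) (Q : β → Prop)
    [DecidablePred P] [DecidablePred Q]
    (hf : Summable fun a => ‖f a‖) (hg : Summable fun b => ‖g b‖) :
    ∑' p : α × β, (if P p.1 ∨ Q p.2 then f p.1 * g p.2 else 0)
      = (∑' b, g b) * (∑' a, if P a then f a else 0)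
        + (∑' a, f a) * (∑' b, if Q b then g b else 0)
        - (∑' a, if P a then f a else 0) * (∑' b, if Q b then g b else 0) := by
  have hfP := summable_norm_ite_of_summable_norm P hf
  have hgQ := summable_norm_ite_of_summable_norm Q hg
  have h₁ := summable_mul_of_summable_norm hfP hg
  have h₂ := summable_mul_of_summable_norm hf hgQ
  have h₃ := summable_mul_of_summable_norm hfP hgQ
  have hsplit : ∀ p : α × β, (if P p.1 ∨ Q p.2 then f p.1 * g p.2 else 0)
      = (if P p.1 then f p.1 else 0) * g p.2 + f p.1 * (if Q p.2 then g p.2 else 0)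
        - (if P p.1 then f p.1 else 0) * (if Q p.2 then g p.2 else 0) := fun p => by
    by_cases hP : P p.1 <;> by_cases hQ : Q p.2 <;> simp [hP, hQ]
  rw [tsum_congr hsplit, (h₁.add h₂).tsum_sub h₃, h₁.tsum_add h₂,
    ← tsum_mul_tsum_of_summable_norm hfP hg, ← tsum_mul_tsum_of_summable_norm hf hgQ,
    ← tsum_mul_tsum_of_summable_norm hfP hgQ, mul_comm (∑' a, if P a then f a else 0)]

lemma integral_exp_two_I_mul (τ : ℝ) (c : ℂ) :
    ∫ s in (0 : ℝ)..τ, exp (2 * I * s * c)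
      = if c = 0 then (τ : ℂ) else (exp (2 * I * τ * c) - 1) / (2 * I * c) := by
  split_ifs with hc
  · simp [hc]
  · have h2Ic : 2 * I * c ≠ 0 := by simp [hc]
    have hcomm : ∀ s : ℝ, 2 * I * s * c = 2 * I * c * s := fun s => by ring
    simp only [hcomm]
    rw [integral_exp_mul_complex h2Ic, ofReal_zero, mul_zero, exp_zero]

lemma integral_exp_two_I_mul_int_mul (τ : ℝ) (a b : ℤ) :
    ∫ s in (0 : ℝ)..τ, exp (2 * I * s * ((a * b : ℤ) : ℂ))
      = I / 2 * (if a = 0 ∨ b = 0 then 0 else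
          (exp (2 * I * τ * ((a * b : ℤ) : ℂ)) - 1) / ((I * a) * (I * b)))
        + τ * (if a = 0 ∨ b = 0 then 1 else 0) := by
  rw [integral_exp_two_I_mul]
  by_cases hab : a = 0 ∨ b = 0
  · simp [hab, mul_eq_zero]
  · push Not at hab
    have ha : (a : ℂ) ≠ 0 := Int.cast_ne_zero.mpr hab.1
    have hb : (b : ℂ) ≠ 0 := Int.cast_ne_zero.mpr hab.2
    rw [if_neg (by exact_mod_cast mul_ne_zero hab.1 hab.2), if_neg (by tauto), if_neg (by tauto)]
    push_cast
    field_simp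
    ring

lemma norm_exp_two_I_mul_int_sub_one_div_le (τ : ℝ) {a b : ℤ} (ha : a ≠ 0) (hb : b ≠ 0) :
    ‖(exp (2 * I * τ * ((a * b : ℤ) : ℂ)) - 1) / ((I * a) * (I * b))‖ ≤ 2 := by
  have hnum : ‖exp (2 * I * τ * ((a * b : ℤ) : ℂ)) - 1‖ ≤ 2 := by
    have hunit : ‖exp (2 * I * τ * ((a * b : ℤ) : ℂ))‖ = 1 := by
      simpa [mul_comm, mul_left_comm, mul_assoc] using norm_exp_I_mul_ofReal (2 * τ * (a * b))
    linarith [norm_sub_le (exp (2 * I * τ * ((a * b : ℤ) : ℂ))) 1, norm_one (α := ℂ)]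
  have hden : (1 : ℝ) ≤ ‖(I * a) * (I * b)‖ := by
    simp only [norm_mul, norm_I, one_mul, norm_intCast]
    exact one_le_mul_of_one_le_of_one_le (by exact_mod_cast Int.one_le_abs ha)
      (by exact_mod_cast Int.one_le_abs hb)
  rw [norm_div, div_le_iff₀ (by linarith)]
  nlinarith [norm_nonneg (exp (2 * I * τ * ((a * b : ℤ) : ℂ)) - 1)]

theorem tsum_mul_integral_exp_two_I_mul_int_mul {α β : Type*} (τ : ℝ) {f : α → ℂ} {g : β → ℂ}
    (K : α → ℤ) (L : β → ℤ) (hf : Summable fun a => ‖f a‖) (hg : Summable fun b => ‖g b‖) :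
    ∑' p : α × β, f p.1 * g p.2 *
        ∫ s in (0 : ℝ)..τ, exp (2 * I * s * ((K p.1 * L p.2 : ℤ) : ℂ))
      = I / 2 * ∑' p : α × β,
          (if K p.1 = 0 ∨ L p.2 = 0 then 0 else
            f p.1 * g p.2 * ((exp (2 * I * τ * ((K p.1 * L p.2 : ℤ) : ℂ)) - 1) /
              ((I * (K p.1 : ℂ)) * (I * (L p.2 : ℂ)))))
        + τ * ((∑' b, g b) * (∑' a, if K a = 0 then f a else 0)
          + (∑' a, f a) * (∑' b, if L b = 0 then g b else 0)
          - (∑' a, if K a = 0 then f a else 0) * (∑' b, if L b = 0 then g b else 0)) := by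
  have hprod := hf.mul_norm hg
  have hoscillating : Summable fun p : α × β =>
      if K p.1 = 0 ∨ L p.2 = 0 then 0 else
        f p.1 * g p.2 * ((exp (2 * I * τ * ((K p.1 * L p.2 : ℤ) : ℂ)) - 1) /
          ((I * (K p.1 : ℂ)) * (I * (L p.2 : ℂ)))) := by
    refine Summable.of_norm_bounded (hprod.mul_left 2) fun p => ?_
    split_ifs with h
    · simp only [norm_zero]; positivity
    · push Not at h
      rw [norm_mul, mul_comm]
      gcongr
      exact norm_exp_two_I_mul_int_sub_one_div_le τ h.1 h.2
  have hresonant : Summable fun p : α × β =>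
      if K p.1 = 0 ∨ L p.2 = 0 then f p.1 * g p.2 else 0 :=
    Summable.of_norm_bounded hprod fun p => by split_ifs <;> simp; positivity
  have hsplit : ∀ p : α × β, f p.1 * g p.2 *
        ∫ s in (0 : ℝ)..τ, exp (2 * I * s * ((K p.1 * L p.2 : ℤ) : ℂ))
      = I / 2 * (if K p.1 = 0 ∨ L p.2 = 0 then 0 else
            f p.1 * g p.2 * ((exp (2 * I * τ * ((K p.1 * L p.2 : ℤ) : ℂ)) - 1) /
              ((I * (K p.1 : ℂ)) * (I * (L p.2 : ℂ)))))
        + τ * (if K p.1 = 0 ∨ L p.2 = 0 then f p.1 * g p.2 else 0) := fun p => by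
    rw [integral_exp_two_I_mul_int_mul]
    split_ifs <;> ring
  rw [tsum_congr hsplit, (hoscillating.mul_left _).tsum_add (hresonant.mul_left _), tsum_mul_left,
    tsum_mul_left, tsum_ite_or_mul (fun a => K a = 0) (fun b => L b = 0) hf hg]

lemma exp_I_mul_sum_intCast_add_mul {ι : Type*} [Fintype ι] (x : ι → ℝ) (a b : ι → ℤ) :
    exp (I * ((∑ i, ((a i + b i : ℤ) : ℝ) * x i : ℝ) : ℂ))
      = exp (I * ((∑ i, (a i : ℝ) * x i : ℝ) : ℂ)) * exp (I * ((∑ i, (b i : ℝ) * x i : ℝ) : ℂ)) := by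
  rw [← exp_add, ← mul_add]
  push_cast
  simp only [add_mul, Finset.sum_add_distrib]

theorem stmt8_general (d : ℕ) (j : Fin d) (τ : ℝ) (x : Fin d → ℝ)
    (w v : (Fin d → ℤ) → ℂ)
    (hw : Summable fun κ : Fin d → ℤ => ‖w κ‖)
    (hv : Summable fun l : Fin d → ℤ => ‖v l‖) :
    ∑' p : (Fin d → ℤ) × (Fin d → ℤ),
        w p.1 * v p.2 *
          Complex.exp (Complex.I * ((∑ i, ((p.1 i + p.2 i : ℤ) : ℝ) * x i : ℝ) : ℂ)) *
          ∫ s in (0 : ℝ)..τ, Complex.exp (2 * Complex.I * s * ((p.1 j * p.2 j : ℤ) : ℂ))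
    = (Complex.I / 2) * ∑' p : (Fin d → ℤ) × (Fin d → ℤ),
        (if p.1 j = 0 ∨ p.2 j = 0 then 0 else
          w p.1 * v p.2 *
            Complex.exp (Complex.I * ((∑ i, ((p.1 i + p.2 i : ℤ) : ℝ) * x i : ℝ) : ℂ)) *
            ((Complex.exp (2 * Complex.I * τ * ((p.1 j * p.2 j : ℤ) : ℂ)) - 1) /
              ((Complex.I * (p.1 j : ℂ)) * (Complex.I * (p.2 j : ℂ)))))
      + τ * ((∑' l : Fin d → ℤ, v l * Complex.exp (Complex.I * ((∑ i, (l i : ℝ) * x i : ℝ) : ℂ))) *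
              (∑' κ : Fin d → ℤ, if κ j = 0 then
                w κ * Complex.exp (Complex.I * ((∑ i, (κ i : ℝ) * x i : ℝ) : ℂ)) else 0)
            + (∑' κ : Fin d → ℤ, w κ * Complex.exp (Complex.I * ((∑ i, (κ i : ℝ) * x i : ℝ) : ℂ))) *
              (∑' l : Fin d → ℤ, if l j = 0 then
                v l * Complex.exp (Complex.I * ((∑ i, (l i : ℝ) * x i : ℝ) : ℂ)) else 0)
            - (∑' κ : Fin d → ℤ, if κ j = 0 then
                w κ * Complex.exp (Complex.I * ((∑ i, (κ i : ℝ) * x i : ℝ) : ℂ)) else 0) *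
              (∑' l : Fin d → ℤ, if l j = 0 then
                v l * Complex.exp (Complex.I * ((∑ i, (l i : ℝ) * x i : ℝ) : ℂ)) else 0)) := by
  have hmodulate : ∀ {u : (Fin d → ℤ) → ℂ}, Summable (fun κ => ‖u κ‖) →
      Summable fun κ => ‖u κ * exp (I * ((∑ i, (κ i : ℝ) * x i : ℝ) : ℂ))‖ := fun hu => by
    simpa only [norm_mul, norm_exp_I_mul_ofReal, mul_one] using hu
  have hfactor : ∀ p : (Fin d → ℤ) × (Fin d → ℤ),
      w p.1 * v p.2 * exp (I * ((∑ i, ((p.1 i + p.2 i : ℤ) : ℝ) * x i : ℝ) : ℂ))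
        = w p.1 * exp (I * ((∑ i, (p.1 i : ℝ) * x i : ℝ) : ℂ))
          * (v p.2 * exp (I * ((∑ i, (p.2 i : ℝ) * x i : ℝ) : ℂ))) := fun p => by
    rw [exp_I_mul_sum_intCast_add_mul]; ring
  simpa only [hfactor] using tsum_mul_integral_exp_two_I_mul_int_mul τ (fun κ : Fin d → ℤ => κ j)
    (fun l => l j) (hmodulate hw) (hmodulate hv)

theorem stmt8 (d : ℕ) (hd : 1 ≤ d) (j : Fin d) (τ : ℝ) (hτ : 0 < τ) (x : Fin d → ℝ)
    (w v : (Fin d → ℤ) → ℂ)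
    (hw : Summable fun κ : Fin d → ℤ => ‖w κ‖)
    (hv : Summable fun l : Fin d → ℤ => ‖v l‖) :
    ∑' p : (Fin d → ℤ) × (Fin d → ℤ),
        w p.1 * v p.2 *
          Complex.exp (Complex.I * ((∑ i, ((p.1 i + p.2 i : ℤ) : ℝ) * x i : ℝ) : ℂ)) *
          ∫ s in (0 : ℝ)..τ, Complex.exp (2 * Complex.I * s * ((p.1 j * p.2 j : ℤ) : ℂ))
    = (Complex.I / 2) * ∑' p : (Fin d → ℤ) × (Fin d → ℤ),
        (if p.1 j = 0 ∨ p.2 j = 0 then 0 else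
          w p.1 * v p.2 *
            Complex.exp (Complex.I * ((∑ i, ((p.1 i + p.2 i : ℤ) : ℝ) * x i : ℝ) : ℂ)) *
            ((Complex.exp (2 * Complex.I * τ * ((p.1 j * p.2 j : ℤ) : ℂ)) - 1) /
              ((Complex.I * (p.1 j : ℂ)) * (Complex.I * (p.2 j : ℂ)))))
      + τ * ((∑' l : Fin d → ℤ, v l * Complex.exp (Complex.I * ((∑ i, (l i : ℝ) * x i : ℝ) : ℂ))) *
              (∑' κ : Fin d → ℤ, if κ j = 0 then
                w κ * Complex.exp (Complex.I * ((∑ i, (κ i : ℝ) * x i : ℝ) : ℂ)) else 0)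
            + (∑' κ : Fin d → ℤ, w κ * Complex.exp (Complex.I * ((∑ i, (κ i : ℝ) * x i : ℝ) : ℂ))) *
              (∑' l : Fin d → ℤ, if l j = 0 then
                v l * Complex.exp (Complex.I * ((∑ i, (l i : ℝ) * x i : ℝ) : ℂ)) else 0)
            - (∑' κ : Fin d → ℤ, if κ j = 0 then
                w κ * Complex.exp (Complex.I * ((∑ i, (κ i : ℝ) * x i : ℝ) : ℂ)) else 0) *
              (∑' l : Fin d → ℤ, if l j = 0 then
                v l * Complex.exp (Complex.I * ((∑ i, (l i : ℝ) * x i : ℝ) : ℂ)) else 0)) :=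
  stmt8_general d j τ x w v hw hv
end
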